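/- Fix a nonnegative integer k and let C_k be the set of all finite sequences of positive integers c = (c_1, …, c_m), of any length m ≥ 0, with c_1 + ⋯ + c_m = k (the compositions of k). Then, in the field of rational functions in two variables x and y over ℚ, Σ_{c ∈ C_k} Π(c; x, y) = (1/[k]_x!) · ∏_{i=1}^k 1/(x^i y − 1), where for c = (c_1,…,c_m) one sets b_i = c_1 + ⋯ + c_i and Π(c; x, y) = ∏_{i=1}^m ( 1/(x^{b_i²} y^{b_i} − 1) ) · ( x^{C(c_i,2)} / [c_i]_x! ), with C(a,2) = a(a−1)/2, and Π(c;x,y) = 1 for the empty sequence (so the identity reads 1 = 1 when k = 0). -/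

import Mathlib

noncomputable section

/-- The field `ℚ(x, y)` of rational functions in two variables over `ℚ`. -/
abbrev K18 : Type _ := FractionRing (MvPolynomial (Fin 2) ℚ)

/-- The variable `x` of `ℚ(x, y)`. -/
def xK : K18 := algebraMap (MvPolynomial (Fin 2) ℚ) K18 (MvPolynomial.X 0)

/-- The variable `y` of `ℚ(x, y)`. -/
def yK : K18 := algebraMap (MvPolynomial (Fin 2) ℚ) K18 (MvPolynomial.X 1)

/-- The `q`-integer `[m]_x = 1 + x + ⋯ + x^{m−1}` in `ℚ(x, y)`. -/
def qIntK (m : ℕ) : K18 := ∑ i ∈ Finset.range m, xK ^ i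

/-- The `q`-factorial `[m]_x!` in `ℚ(x, y)`. -/
def qFactK (m : ℕ) : K18 := ∏ j ∈ Finset.range m, qIntK (j + 1)

/-!
Splitting off the last block `j = k - p` of a composition gives the recursion
`S_k = (x^{k²} y^k - 1)⁻¹ ∑_{p<k} S_p x^{C(k-p,2)} / [k-p]_x!`, `S_0 = 1`, for the left-hand
side.
The right-hand side `R_k` satisfies the same recursion: after multiplying by
`[k]_x! ∏_{i ≤ k} (x^i y - 1)` it becomes the `q`-Newton expansion
`z^k = ∑_j [k choose j]_x ∏_{s<j} (z - x^s)` at `z = x^k y`, because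
`∏_{s<j} (x^k y - x^s) = x^{C(j,2)} ∏_{k-j < i ≤ k} (x^i y - 1)`.
All denominators are nonzero, as one sees by specialising to `x = 1`, `y = 2`.
-/

open Finset

section QAnalogues

variable {R : Type*} [CommRing R] (q : R)

def qInt (m : ℕ) : R := ∑ i ∈ range m, q ^ i

def qFact (m : ℕ) : R := ∏ j ∈ range m, qInt q (j + 1)

/-- The Gaussian binomial coefficient, defined by the `q`-Pascal rule so that no division is
needed. -/
def qBinom : ℕ → ℕ → R
  | _, 0 => 1
  | 0, _ + 1 => 0
  | n + 1, j + 1 => qBinom n j + q ^ (j + 1) * qBinom n (j + 1)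

@[simp] lemma qBinom_zero_right (n : ℕ) : qBinom q n 0 = 1 := by cases n <;> rfl

lemma qBinom_succ_succ (n j : ℕ) :
    qBinom q (n + 1) (j + 1) = qBinom q n j + q ^ (j + 1) * qBinom q n (j + 1) := rfl

lemma qBinom_eq_zero_of_lt : ∀ {n j : ℕ}, n < j → qBinom q n j = 0
  | 0, _ + 1, _ => rfl
  | n + 1, j + 1, h => by
    rw [qBinom_succ_succ, qBinom_eq_zero_of_lt (by omega), qBinom_eq_zero_of_lt (by omega),
      mul_zero, add_zero]

lemma qInt_add (a b : ℕ) : qInt q (a + b) = qInt q a + q ^ a * qInt q b := by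
  simp only [qInt, sum_range_add, mul_sum, pow_add]

lemma qFact_succ (m : ℕ) : qFact q (m + 1) = qFact q m * qInt q (m + 1) :=
  prod_range_succ _ _

lemma qBinom_mul_qFact_mul_qFact : ∀ {n j : ℕ}, j ≤ n →
    qBinom q n j * qFact q j * qFact q (n - j) = qFact q n
  | n, 0, _ => by simp [qFact]
  | n + 1, j + 1, h => by
    obtain rfl | ⟨m, rfl⟩ : j = n ∨ ∃ m, n = j + 1 + m :=
      (eq_or_lt_of_le (Nat.le_of_succ_le_succ h)).imp id fun h => ⟨n - (j + 1), by omega⟩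
    · have ih := qBinom_mul_qFact_mul_qFact (n := j) le_rfl
      rw [Nat.sub_self] at ih ⊢
      rw [qBinom_succ_succ, qBinom_eq_zero_of_lt q (Nat.lt_succ_self j), qFact_succ]
      linear_combination qInt q (j + 1) * ih
    · have ih₁ := qBinom_mul_qFact_mul_qFact (n := j + 1 + m) (j := j) (by omega)
      have ih₂ := qBinom_mul_qFact_mul_qFact (n := j + 1 + m) (j := j + 1) (by omega)
      rw [show j + 1 + m - j = m + 1 by omega] at ih₁
      rw [show j + 1 + m - (j + 1) = m by omega] at ih₂
      rw [show j + 1 + m + 1 - (j + 1) = m + 1 by omega, qBinom_succ_succ, qFact_succ q (j + 1 + m),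
        show j + 1 + m + 1 = j + 1 + (m + 1) by omega, qInt_add q (j + 1) (m + 1),
        qFact_succ q j, qFact_succ q m]
      rw [qFact_succ q m] at ih₁
      rw [qFact_succ q j] at ih₂
      linear_combination qInt q (j + 1) * ih₁ + q ^ (j + 1) * qInt q (m + 1) * ih₂

theorem sum_qBinom_mul_prod_sub_pow (z : R) (n : ℕ) :
    ∑ j ∈ range (n + 1), qBinom q n j * ∏ s ∈ range j, (z - q ^ s) = z ^ n := by
  induction n with
  | zero => simp
  | succ n ih =>
    set P : ℕ → R := fun j => ∏ s ∈ range j, (z - q ^ s) with hP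
    have hzP (j : ℕ) : z * P j = P (j + 1) + q ^ j * P j := by
      simp only [hP, prod_range_succ]
      ring
    have hshift : ∑ j ∈ range (n + 1), q ^ (j + 1) * qBinom q n (j + 1) * P (j + 1) + P 0 =
        ∑ j ∈ range (n + 1), q ^ j * (qBinom q n j * P j) := by
      have h := sum_range_succ' (fun j => q ^ j * (qBinom q n j * P j)) (n + 1)
      rw [sum_range_succ, qBinom_eq_zero_of_lt q (Nat.lt_succ_self n)] at h
      simpa only [zero_mul, mul_zero, add_zero, pow_zero, qBinom_zero_right, one_mul, mul_assoc]
        using h.symm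
    calc ∑ j ∈ range (n + 2), qBinom q (n + 1) j * P j
        = ∑ j ∈ range (n + 1), qBinom q n j * P (j + 1) +
            (∑ j ∈ range (n + 1), q ^ (j + 1) * qBinom q n (j + 1) * P (j + 1) + P 0) := by
          simp only [sum_range_succ' _ (n + 1), qBinom_succ_succ, add_mul, sum_add_distrib,
            qBinom_zero_right, one_mul, add_assoc]
      _ = z * ∑ j ∈ range (n + 1), qBinom q n j * P j := by
          rw [hshift, mul_sum, ← sum_add_distrib]
          exact sum_congr rfl fun j _ => by rw [mul_left_comm z, hzP]; ring
      _ = z ^ (n + 1) := by rw [ih, pow_succ']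

lemma prod_range_pow_add_mul_sub_pow (y : R) (p j : ℕ) :
    ∏ s ∈ range j, (q ^ (p + j) * y - q ^ s) =
      q ^ j.choose 2 * ∏ i ∈ range j, (q ^ (p + i + 1) * y - 1) := by
  induction j with
  | zero => simp
  | succ j ih =>
    have hfactor : ∏ s ∈ range j, (q ^ (p + (j + 1)) * y - q ^ (s + 1)) =
        q ^ j * ∏ s ∈ range j, (q ^ (p + j) * y - q ^ s) := by
      rw [← card_range j, ← prod_const, card_range, ← prod_mul_distrib]
      exact prod_congr rfl fun s _ => by ring
    rw [prod_range_succ', hfactor, ih, prod_range_succ, Nat.choose_succ_succ', Nat.choose_one_right,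
      pow_add]
    ring

lemma sum_range_qBinom_sub_mul_prod_sub_pow (z : R) (n : ℕ) :
    ∑ p ∈ range n, qBinom q n (n - p) * ∏ s ∈ range (n - p), (z - q ^ s) = z ^ n - 1 := by
  rw [← sum_qBinom_mul_prod_sub_pow q z n, sum_range_succ', ← sum_range_reflect]
  simp only [qBinom_zero_right, range_zero, prod_empty, mul_one, add_sub_cancel_right]
  refine sum_congr rfl fun p hp => ?_
  rw [show n - (n - 1 - p) = p + 1 by have := mem_range.1 hp; omega]

lemma map_qFact {S : Type*} [CommRing S] (f : R →+* S) (m : ℕ) :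
    f (qFact q m) = qFact (f q) m := by
  simp [qFact, qInt, map_prod, map_sum, map_pow]

lemma qFact_one (m : ℕ) : qFact (1 : R) m = (m.factorial : R) := by
  simp [qFact, qInt, ← prod_range_add_one_eq_factorial]

end QAnalogues

def blockWeight {M : Type*} [CommMonoid M] (g : ℕ → ℕ → M) (l : List ℕ) : M :=
  ∏ i ∈ range l.length, g (l.take (i + 1)).sum (l.getD i 0)

lemma blockWeight_append_singleton {M : Type*} [CommMonoid M] (g : ℕ → ℕ → M) (l : List ℕ)
    (j : ℕ) :
    blockWeight g (l ++ [j]) = blockWeight g l * g (l.sum + j) j := by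
  rw [blockWeight, List.length_append, List.length_singleton, prod_range_succ,
    List.take_of_length_le (by simp), List.sum_append, List.sum_singleton,
    List.getD_append_right _ _ _ _ le_rfl, Nat.sub_self]
  congr 1
  refine prod_congr rfl fun i hi => ?_
  have hi := mem_range.1 hi
  rw [List.take_append_of_le_length (by omega), List.getD_append _ _ _ _ hi]

lemma Composition.sum_dropLast_blocks_add_getLast {n : ℕ} (c : Composition n)
    (h : c.blocks ≠ []) :
    c.blocks.dropLast.sum + c.blocks.getLast h = n := by
  rw [← List.sum_singleton (x := c.blocks.getLast h), ← List.sum_append,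
    List.dropLast_append_getLast, c.blocks_sum]

lemma Composition.blocks_ne_nil {n : ℕ} (c : Composition n) (hn : 0 < n) : c.blocks ≠ [] := by
  rw [Ne, c.blocks_eq_nil]
  exact hn.ne'

lemma Composition.sum_dropLast_blocks_lt {n : ℕ} (c : Composition n) (hn : 0 < n) :
    c.blocks.dropLast.sum < n := by
  have hne := c.blocks_ne_nil hn
  have := c.sum_dropLast_blocks_add_getLast hne
  have := c.blocks_pos (List.getLast_mem hne)
  omega

lemma Composition.dropLast_blocks_append {n : ℕ} (c : Composition n) (hn : 0 < n) :
    c.blocks.dropLast ++ [n - c.blocks.dropLast.sum] = c.blocks := by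
  have hne := c.blocks_ne_nil hn
  have hlast : n - c.blocks.dropLast.sum = c.blocks.getLast hne := by
    have := c.sum_dropLast_blocks_add_getLast hne
    omega
  rw [hlast, List.dropLast_append_getLast]

lemma Composition.sum_succ {M : Type*} [AddCommMonoid M] (k : ℕ) (f : List ℕ → M) :
    ∑ c : Composition (k + 1), f c.blocks =
      ∑ p ∈ range (k + 1), ∑ c : Composition p, f (c.blocks ++ [k + 1 - p]) := by
  rw [sum_sigma']
  refine sum_bij'
    (fun c _ => ⟨c.blocks.dropLast.sum,
      ⟨c.blocks.dropLast, fun h => c.blocks_pos (List.mem_of_mem_dropLast h), rfl⟩⟩)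
    (fun x hx => ⟨x.2.blocks ++ [k + 1 - x.1], ?_, ?_⟩) ?_ ?_ ?_ ?_ ?_
  · intro i hi
    rw [List.mem_append, List.mem_singleton] at hi
    rcases hi with hi | rfl
    · exact x.2.blocks_pos hi
    · have := mem_range.1 (mem_sigma.1 hx).1
      omega
  · have := mem_range.1 (mem_sigma.1 hx).1
    rw [List.sum_append, List.sum_singleton, x.2.blocks_sum]
    omega
  · intro c _
    exact mem_sigma.2 ⟨mem_range.2 (c.sum_dropLast_blocks_lt k.succ_pos), mem_univ _⟩
  · exact fun _ _ => mem_univ _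
  · intro c _
    exact Composition.ext (c.dropLast_blocks_append k.succ_pos)
  · rintro ⟨p, c⟩ _
    rw [Composition.sigma_eq_iff_blocks_eq]
    exact List.dropLast_concat
  · intro c _
    rw [c.dropLast_blocks_append k.succ_pos]

section Field

variable {F : Type*} [Field F] (q y : F)

lemma sum_range_inv_qFact_mul_prod_mul (hq : ∀ m, qFact q m ≠ 0)
    (hy : ∀ i, q ^ (i + 1) * y ≠ 1) (n : ℕ) :
    ∑ p ∈ range n, (qFact q p * ∏ i ∈ range p, (q ^ (i + 1) * y - 1))⁻¹ *
        (q ^ (n - p).choose 2 / qFact q (n - p)) =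
      (qFact q n * ∏ i ∈ range n, (q ^ (i + 1) * y - 1))⁻¹ * (q ^ (n ^ 2) * y ^ n - 1) := by
  have hD (m : ℕ) : ∏ i ∈ range m, (q ^ (i + 1) * y - 1) ≠ 0 :=
    prod_ne_zero_iff.2 fun i _ => sub_ne_zero.2 (hy i)
  rw [eq_inv_mul_iff_mul_eq₀ (mul_ne_zero (hq n) (hD n)), mul_sum,
    show q ^ (n ^ 2) * y ^ n = (q ^ n * y) ^ n by ring, ← sum_range_qBinom_sub_mul_prod_sub_pow q]
  refine sum_congr rfl fun p hp => ?_
  obtain ⟨j, rfl⟩ : ∃ j, n = p + j := ⟨n - p, by have := mem_range.1 hp; omega⟩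
  have hfact := qBinom_mul_qFact_mul_qFact q (Nat.le_add_left j p)
  rw [Nat.add_sub_cancel] at hfact
  rw [Nat.add_sub_cancel_left, prod_range_pow_add_mul_sub_pow, ← hfact, prod_range_add]
  have hp := hq p
  have hj := hq j
  have hDp := hD p
  generalize ∏ i ∈ range p, (q ^ (i + 1) * y - 1) = Dp at hDp ⊢
  generalize ∏ i ∈ range j, (q ^ (p + i + 1) * y - 1) = E
  field_simp

theorem sum_blockWeight_composition (hq : ∀ m, qFact q m ≠ 0)
    (hy : ∀ a b, 0 < b → q ^ a * y ^ b ≠ 1) (k : ℕ) :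
    ∑ c : Composition k,
        blockWeight (fun b j => (q ^ (b ^ 2) * y ^ b - 1)⁻¹ * (q ^ j.choose 2 / qFact q j))
          c.blocks =
      (qFact q k * ∏ i ∈ range k, (q ^ (i + 1) * y - 1))⁻¹ := by
  induction k using Nat.strong_induction_on with
  | _ k ih =>
    rcases k with _ | k
    · have hnil (c : Composition 0) : c.blocks = [] := c.blocks_eq_nil.2 rfl
      simp [hnil, blockWeight, qFact, composition_card]
    have hz : q ^ ((k + 1) ^ 2) * y ^ (k + 1) - 1 ≠ 0 := sub_ne_zero.2 (hy _ _ k.succ_pos)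
    have hy₁ (i : ℕ) : q ^ (i + 1) * y ≠ 1 := by simpa using hy (i + 1) 1 one_pos
    rw [Composition.sum_succ, ← inv_mul_cancel_left₀ hz (qFact q (k + 1) * _)⁻¹,
      mul_comm (_ - 1), ← sum_range_inv_qFact_mul_prod_mul q y hq hy₁, mul_sum]
    refine sum_congr rfl fun p hp => ?_
    simp only [blockWeight_append_singleton, Composition.blocks_sum,
      Nat.add_sub_cancel' (mem_range.1 hp).le, ← sum_mul, ih p (mem_range.1 hp)]
    ring

end Field

lemma qFact_xK_ne_zero (m : ℕ) : qFact xK m ≠ 0 := by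
  rw [xK, ← map_qFact, Ne, IsFractionRing.to_map_eq_zero_iff]
  intro h
  simpa [map_qFact, qFact_one, Nat.factorial_ne_zero] using congrArg (MvPolynomial.eval ![1, 2]) h

lemma xK_pow_mul_yK_pow_ne_one (a b : ℕ) (hb : 0 < b) : xK ^ a * yK ^ b ≠ 1 := by
  rw [xK, yK, ← map_pow, ← map_pow, ← map_mul,
    ← map_one (algebraMap (MvPolynomial (Fin 2) ℚ) K18),
    (IsFractionRing.injective (MvPolynomial (Fin 2) ℚ) K18).ne_iff]
  intro h
  have h2 : (2 : ℚ) ^ b = 1 := by simpa using congrArg (MvPolynomial.eval ![1, 2]) h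
  exact (one_lt_pow₀ one_lt_two hb.ne').ne' h2

/-- Fix `k ≥ 0` and let `C_k` be the set of compositions
`c = (c_1, …, c_m)` of `k` (sequences of positive integers of any length `m ≥ 0` with sum `k`).
Then, in `ℚ(x, y)`,
`∑_{c ∈ C_k} Π(c; x, y) = (1/[k]_x!) ∏_{i=1}^k 1/(x^i y − 1)`, where, with
`b_i = c_1 + ⋯ + c_i`,
`Π(c; x, y) = ∏_{i=1}^m (1/(x^{b_i²} y^{b_i} − 1)) (x^{C(c_i,2)}/[c_i]_x!)`
(and `Π(c; x, y) = 1` for the empty composition, so the identity reads `1 = 1` when `k = 0`). -/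
theorem statement18 (k : ℕ) :
    ∑ c : Composition k,
        ∏ i ∈ Finset.range c.length,
          ((xK ^ (c.sizeUpTo (i + 1)) ^ 2 * yK ^ c.sizeUpTo (i + 1) - 1)⁻¹ *
            (xK ^ (c.blocks.getD i 0).choose 2 / qFactK (c.blocks.getD i 0))) =
      (qFactK k)⁻¹ * ∏ i ∈ Finset.Icc 1 k, (xK ^ i * yK - 1)⁻¹ := by
  rw [← Ico_add_one_right_eq_Icc, prod_Ico_eq_prod_range, Nat.add_sub_cancel, prod_inv_distrib,
    ← mul_inv]
  simp only [add_comm 1]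
  exact sum_blockWeight_composition xK yK qFact_xK_ne_zero xK_pow_mul_yK_pow_ne_one k

end
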